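/- Let (W,S) be a Coxeter system and s,t ∈ S with st of finite order m ≥ 3. Define a map on D_R(s,t) by sending w, the i-th element of its string λ_w, to the (m−i)-th element of λ_w, denoted w̃. Then w ↦ w̃ is a well-defined involution of D_R(s,t). -/

import Mathlib

open CoxeterSystem

/-- The alternating product `s_i s_j s_i ⋯` with `k` factors, starting with `s_i`. -/
def altP {B W : Type*} [Group W] {M : CoxeterMatrix B} (cs : CoxeterSystem M W)
    (i j : B) : ℕ → W
  | 0 => 1
  | (k + 1) => altP cs i j k * (if Even k then cs.simple i else cs.simple j)

/-!
Every element of the parabolic subgroup `⟨s_i, s_j⟩` is the entry `altZ a` in some position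
`a : ℤ` of the two-sided alternating string `⋯, s_j s_i, s_j, 1, s_i, s_i s_j, ⋯`, and
positions `a`, `b` give the same element iff `2m ∣ a - b` (`lengthParity` separates the two
parities, `orderOf` does the rest). If `x` has minimal length in its coset, the exchange
property (obtained from Tits' permutation representation on `W × ZMod 2`) shows
`ℓ(x · altZ a) = ℓ x + |a|` for `|a| ≤ m`. Hence among `s_i, s_j` the element `x · altZ a` has
no right descent for `a = 0`, both for `a = m`, and exactly one for `0 < |a| < m`: the elements
of `D_R(s_i, s_j)` in the coset are the positions `0 < |a| < m`, each represented once, and `w̃`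
is the position of the same sign and absolute value `m - |a|`.
-/

theorem List.even_count_of_getElem_add_eq {α : Type*} [BEq α] (L : List α) (p : ℕ)
    (hL : L.length = 2 * p) (h : ∀ k (hk : k < p), L[p + k] = L[k]) (a : α) :
    Even (L.count a) := by
  have hdrop : L.drop p = L.take p :=
    ext_getElem (by simp; omega) fun k h₁ h₂ => by
      simp only [getElem_drop, getElem_take]
      exact h k (by simp at h₂; omega)
  rw [← take_append_drop p L, count_append, hdrop]
  exact Even.add_self _

namespace CoxeterSystem

open List

variable {B W : Type*} [Group W] {M : CoxeterMatrix B} (cs : CoxeterSystem M W)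

theorem prod_map_alternatingWord_two_mul {G : Type*} [Monoid G] (f : B → G) (i j : B) (p : ℕ) :
    ((alternatingWord i j (2 * p)).map f).prod = (f i * f j) ^ p := by
  induction p with
  | zero => simp [alternatingWord]
  | succ p ih =>
    rw [show 2 * (p + 1) = 2 * p + 1 + 1 by ring, alternatingWord_succ', alternatingWord_succ']
    simp [ih, pow_succ', mul_assoc]

section Tits

open scoped Classical

/-- Tits' sign representation of `s_i`; its lift to `W` yields the exchange property. -/
noncomputable def titsPerm (i : B) : Equiv.Perm (W × ZMod 2) :=
  (MulAut.conj (cs.simple i)).toEquiv.prodShear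
    fun t => Equiv.addRight (if t = cs.simple i then 1 else 0)

theorem titsPerm_apply (i : B) (t : W) (ε : ZMod 2) :
    cs.titsPerm i (t, ε) =
      (cs.simple i * t * (cs.simple i)⁻¹, ε + if t = cs.simple i then 1 else 0) := rfl

theorem prod_map_titsPerm_apply (ω : List B) (t : W) (ε : ZMod 2) :
    (ω.map cs.titsPerm).prod (t, ε) =
      (cs.wordProd ω * t * (cs.wordProd ω)⁻¹,
        ε + (cs.leftInvSeq ω).count (cs.wordProd ω * t * (cs.wordProd ω)⁻¹)) := by
  induction ω with
  | nil => simp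
  | cons c ω ih =>
    set v := cs.wordProd ω * t * (cs.wordProd ω)⁻¹
    have hv : cs.wordProd (c :: ω) * t * (cs.wordProd (c :: ω))⁻¹ =
        MulAut.conj (cs.simple c) v := by
      simp [v, wordProd_cons, mul_assoc]
    have hsc : (MulAut.conj (cs.simple c) v = cs.simple c) ↔ v = cs.simple c := by
      rw [← (MulAut.conj (cs.simple c)).injective.eq_iff, MulAut.conj_apply]
      simp [mul_assoc]
    rw [map_cons, prod_cons, Equiv.Perm.mul_apply, ih, titsPerm_apply, hv, leftInvSeq,
      count_cons, count_map_of_injective _ _ (MulAut.conj (cs.simple c)).injective]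
    refine Prod.ext rfl ?_
    simp only [beq_iff_eq, @eq_comm _ (cs.simple c), hsc]
    push_cast
    ring

theorem isLiftable_titsPerm : M.IsLiftable cs.titsPerm := by
  intro i j
  ext ⟨t, ε⟩ : 1
  have hprod : cs.wordProd (alternatingWord i j (2 * M i j)) = 1 := by
    rw [prod_alternatingWord_eq_mul_pow]
    simp [simple_mul_simple_pow]
  have heven : Even ((cs.leftInvSeq (alternatingWord i j (2 * M i j))).count t) := by
    refine List.even_count_of_getElem_add_eq _ (M i j) (by simp) (fun k hk => ?_) t
    rw [getElem_leftInvSeq_alternatingWord _ _ _ _ _ (by omega),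
      getElem_leftInvSeq_alternatingWord _ _ _ _ _ (by omega),
      prod_alternatingWord_eq_mul_pow, prod_alternatingWord_eq_mul_pow,
      show (2 * (M i j + k) + 1) / 2 = M i j + k by omega, pow_add, simple_mul_simple_pow',
      one_mul, show (2 * k + 1) / 2 = k by omega]
    simp [parity_simps]
  rw [← prod_map_alternatingWord_two_mul, prod_map_titsPerm_apply, hprod]
  simp [(ZMod.natCast_eq_zero_iff_even).mpr heven]

theorem count_leftInvSeq_eq_of_wordProd_eq {ω ω' : List B} (h : cs.wordProd ω = cs.wordProd ω')
    (u : W) : ((cs.leftInvSeq ω).count u : ZMod 2) = (cs.leftInvSeq ω').count u := by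
  have hlift : ∀ ω : List B, cs.lift ⟨_, cs.isLiftable_titsPerm⟩ (cs.wordProd ω) =
      (ω.map cs.titsPerm).prod := by
    intro ω
    rw [wordProd, map_list_prod, map_map]
    congr 1
    exact map_congr_left fun c _ => cs.lift_apply_simple cs.isLiftable_titsPerm c
  have key : ∀ ω : List B, cs.lift ⟨_, cs.isLiftable_titsPerm⟩ (cs.wordProd ω)
      ((cs.wordProd ω)⁻¹ * u * cs.wordProd ω, 0) =
        (u, ((cs.leftInvSeq ω).count u : ZMod 2)) := by
    intro ω
    rw [hlift, prod_map_titsPerm_apply]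
    simp [mul_assoc]
  simpa [h] using congrArg Prod.snd ((key ω).symm.trans (h ▸ key ω'))

theorem simple_mem_leftInvSeq_of_isLeftDescent {ω : List B} {c : B}
    (h : cs.IsLeftDescent (cs.wordProd ω) c) : cs.simple c ∈ cs.leftInvSeq ω := by
  obtain ⟨ω₁, hred₁, hω₁⟩ := cs.exists_isReduced (cs.simple c * cs.wordProd ω)
  have hprod : cs.wordProd (c :: ω₁) = cs.wordProd ω := by
    rw [wordProd_cons, ← hω₁, simple_mul_simple_cancel_left]
  have hred : cs.IsReduced (c :: ω₁) := by
    rw [IsReduced, hprod, length_cons, ← hred₁.eq, ← hω₁]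
    exact (cs.isLeftDescent_iff.mp h).symm
  have hcount : (cs.leftInvSeq (c :: ω₁)).count (cs.simple c) = 1 := by
    rw [hred.nodup_leftInvSeq.count, if_pos (by simp [leftInvSeq])]
  have hodd := cs.count_leftInvSeq_eq_of_wordProd_eq hprod (cs.simple c)
  rw [hcount, Nat.cast_one] at hodd
  refine count_pos_iff.mp (Nat.pos_of_ne_zero fun h0 => ?_)
  rw [h0, Nat.cast_zero] at hodd
  exact zero_ne_one hodd.symm

theorem simple_mem_rightInvSeq_of_isRightDescent {ω : List B} {c : B}
    (h : cs.IsRightDescent (cs.wordProd ω) c) : cs.simple c ∈ cs.rightInvSeq ω := by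
  rw [← isLeftDescent_inv_iff, ← wordProd_reverse] at h
  simpa [leftInvSeq_reverse] using cs.simple_mem_leftInvSeq_of_isLeftDescent h

theorem exists_eraseIdx_of_isRightDescent {ω : List B} {c : B}
    (h : cs.IsRightDescent (cs.wordProd ω) c) :
    ∃ r < ω.length, cs.wordProd ω * cs.simple c = cs.wordProd (ω.eraseIdx r) := by
  obtain ⟨r, hr, hget⟩ := mem_iff_getElem.mp (cs.simple_mem_rightInvSeq_of_isRightDescent h)
  rw [length_rightInvSeq] at hr
  refine ⟨r, hr, ?_⟩
  rw [← wordProd_mul_getD_rightInvSeq, getD_eq_getElem _ _ (by simpa using hr), hget]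

end Tits

section Dihedral

variable {i j : B}

/-- Position `a` of the two-sided alternating string `⋯, s_j s_i, s_j, 1, s_i, s_i s_j, ⋯`.
The paper's two strings in the coset `x⟨s_i, s_j⟩` are the `x * altZ a` with `0 < a < m` and
with `-m < a < 0`. -/
def altZ (i j : B) (a : ℤ) : W :=
  (cs.simple i * cs.simple j) ^ (a / 2) * if Even a then 1 else cs.simple i

theorem altZ_zero : cs.altZ i j 0 = 1 := by simp [altZ]

theorem altZ_add_one (a : ℤ) :
    cs.altZ i j (a + 1) = cs.altZ i j a * cs.simple (if Even a then i else j) := by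
  rcases Int.even_or_odd' a with ⟨c, rfl | rfl⟩
  · rw [altZ, altZ, show (2 * c + 1) / 2 = c by omega]
    simp [parity_simps]
  · rw [altZ, altZ, show (2 * c + 1 + 1) / 2 = c + 1 by omega, show (2 * c + 1) / 2 = c by omega]
    have heven : Even (2 * c + 1 + 1) := ⟨c + 1, by ring⟩
    have hodd : ¬ Even (2 * c + 1) := by simp [parity_simps]
    simp [heven, hodd, zpow_add_one, mul_assoc]

theorem altZ_sub_one (a : ℤ) :
    cs.altZ i j (a - 1) = cs.altZ i j a * cs.simple (if Even a then j else i) := by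
  have h := cs.altZ_add_one (i := i) (j := j) (a - 1)
  rw [sub_add_cancel] at h
  have hletter : (if Even (a - 1) then i else j) = if Even a then j else i := by
    by_cases ha : Even a <;> simp [ha]
  rw [h, hletter, simple_mul_simple_cancel_right]

theorem altZ_natCast (k : ℕ) : cs.altZ i j k = altP cs i j k := by
  induction k with
  | zero => exact cs.altZ_zero
  | succ k ih =>
    rw [Nat.cast_succ, altZ_add_one, ih, altP]
    by_cases hk : Even k <;> simp [hk]

theorem altZ_neg_natCast (k : ℕ) : cs.altZ i j (-k) = altP cs j i k := by
  induction k with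
  | zero => simpa [altP] using cs.altZ_zero
  | succ k ih =>
    rw [Nat.cast_succ, neg_add, ← sub_eq_add_neg, altZ_sub_one, ih, altP]
    by_cases hk : Even k <;> simp [hk]

theorem ite_altP_eq_altZ (b : Bool) (k : ℕ) :
    (if b then altP cs i j k else altP cs j i k) = cs.altZ i j (if b then (k : ℤ) else -k) := by
  cases b <;> simp [altZ_natCast, altZ_neg_natCast]

theorem altZ_mul_simple (a : ℤ) {c : B} (hc : c = i ∨ c = j) :
    cs.altZ i j a * cs.simple c = cs.altZ i j (a + 1) ∨
      cs.altZ i j a * cs.simple c = cs.altZ i j (a - 1) := by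
  rw [altZ_add_one, altZ_sub_one]
  by_cases ha : Even a <;> rcases hc with rfl | rfl <;> simp [ha]

theorem lengthParity_altZ (a : ℤ) :
    cs.lengthParity (cs.altZ i j a) = Multiplicative.ofAdd (a : ZMod 2) := by
  induction a using Int.induction_on with
  | zero => simp [altZ_zero]
  | succ n ih =>
    rw [altZ_add_one, map_mul, ih, lengthParity_simple, ← ofAdd_add]
    push_cast; rfl
  | pred n ih =>
    rw [altZ_sub_one, map_mul, ih, lengthParity_simple, ← ofAdd_add]
    push_cast
    rw [sub_eq_add_neg, show (-1 : ZMod 2) = 1 from rfl]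

theorem altZ_mem_closure (a : ℤ) :
    cs.altZ i j a ∈ Subgroup.closure {cs.simple i, cs.simple j} := by
  have hi : cs.simple i ∈ Subgroup.closure {cs.simple i, cs.simple j} :=
    Subgroup.subset_closure (by simp)
  have hj : cs.simple j ∈ Subgroup.closure {cs.simple i, cs.simple j} :=
    Subgroup.subset_closure (by simp)
  refine mul_mem (zpow_mem (mul_mem hi hj) _) ?_
  split
  exacts [one_mem _, hi]

theorem exists_wordProd_eq_altZ {δ : List B} (hδ : ∀ c ∈ δ, c = i ∨ c = j) :
    ∃ a : ℤ, a.natAbs ≤ δ.length ∧ cs.wordProd δ = cs.altZ i j a := by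
  induction δ using List.reverseRecOn with
  | nil => exact ⟨0, by simp, by simp [altZ_zero]⟩
  | append_singleton δ c ih =>
    obtain ⟨a, ha, hδa⟩ := ih fun d hd => hδ d (by simp [hd])
    rw [wordProd_append, wordProd_singleton, hδa, length_append, length_singleton]
    rcases cs.altZ_mul_simple a (hδ c (by simp)) with h | h
    exacts [⟨a + 1, by omega, h⟩, ⟨a - 1, by omega, h⟩]

variable {m : ℕ}

theorem altZ_eq_altZ_iff (hm : orderOf (cs.simple i * cs.simple j) = m) {a b : ℤ} :
    cs.altZ i j a = cs.altZ i j b ↔ (2 * m : ℤ) ∣ a - b := by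
  have hpow : ∀ c d : ℤ, (cs.simple i * cs.simple j) ^ c = (cs.simple i * cs.simple j) ^ d ↔
      (m : ℤ) ∣ c - d := by
    intro c d
    rw [zpow_eq_zpow_iff_modEq, hm, Int.modEq_iff_dvd, ← dvd_neg, neg_sub]
  constructor
  · intro h
    have hpar : a % 2 = b % 2 := by
      have h2 := congrArg cs.lengthParity h
      rw [lengthParity_altZ, lengthParity_altZ] at h2
      have := (ZMod.intCast_eq_intCast_iff_dvd_sub _ _ _).mp (Multiplicative.ofAdd.injective h2)
      omega
    have hev : Even a ↔ Even b := by simp only [Int.even_iff]; omega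
    rw [altZ, altZ, if_congr hev rfl rfl, mul_left_inj, hpow] at h
    rw [show a - b = 2 * (a / 2 - b / 2) by omega]
    exact mul_dvd_mul_left 2 h
  · rintro ⟨c, hc⟩
    rw [mul_assoc] at hc
    generalize hd : (m : ℤ) * c = d at hc
    have hev : Even a ↔ Even b := by simp only [Int.even_iff]; omega
    rw [altZ, altZ, if_congr hev rfl rfl, mul_left_inj, hpow]
    exact ⟨c, by omega⟩

theorem eq_of_altZ_eq_altZ (hm : orderOf (cs.simple i * cs.simple j) = m) {a b : ℤ}
    (h : cs.altZ i j a = cs.altZ i j b) (hab : (a - b).natAbs < 2 * m) : a = b := by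
  have := Int.eq_zero_of_abs_lt_dvd ((cs.altZ_eq_altZ_iff hm).mp h)
    (by rw [Int.abs_eq_natAbs]; omega)
  omega

theorem exists_altZ_eq_of_mem_closure (hm : orderOf (cs.simple i * cs.simple j) = m)
    (hm0 : 0 < m) {u : W} (hu : u ∈ Subgroup.closure {cs.simple i, cs.simple j}) :
    ∃ a : ℤ, -m < a ∧ a ≤ m ∧ u = cs.altZ i j a := by
  have hsimple : ∀ y ∈ ({cs.simple i, cs.simple j} : Set W),
      ∃ c, (c = i ∨ c = j) ∧ y = cs.simple c := by
    rintro y (rfl | rfl)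
    exacts [⟨i, Or.inl rfl, rfl⟩, ⟨j, Or.inr rfl, rfl⟩]
  obtain ⟨a, rfl⟩ : ∃ a, u = cs.altZ i j a := by
    induction hu using Subgroup.closure_induction_right with
    | one => exact ⟨0, cs.altZ_zero.symm⟩
    | mul_right x _ y hy ih =>
      obtain ⟨a, rfl⟩ := ih
      obtain ⟨c, hc, rfl⟩ := hsimple y hy
      rcases cs.altZ_mul_simple a hc with h | h <;> exact ⟨_, h⟩
    | mul_inv_cancel x _ y hy ih =>
      obtain ⟨a, rfl⟩ := ih
      obtain ⟨c, hc, rfl⟩ := hsimple y hy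
      rw [inv_simple]
      rcases cs.altZ_mul_simple a hc with h | h <;> exact ⟨_, h⟩
  have h2m : (0 : ℤ) < 2 * m := by omega
  refine ⟨(a + (m - 1)) % (2 * m) - (m - 1),
    by linarith [Int.emod_nonneg (a + (m - 1)) h2m.ne'],
    by linarith [Int.emod_lt_of_pos (a + (m - 1)) h2m], (cs.altZ_eq_altZ_iff hm).mpr ?_⟩
  convert (Int.mod_modEq (a + (m - 1)) (2 * m)).dvd using 1
  ring

end Dihedral

section MinimalCosetRepresentative

variable {i j : B} {m : ℕ} {x : W}

def altWord (i j : B) (k : ℕ) : List B :=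
  (range k).map fun n => if Even n then i else j

@[simp]
theorem length_altWord (i j : B) (k : ℕ) : (altWord i j k).length = k := by
  simp [altWord]

theorem wordProd_altWord (i j : B) (k : ℕ) : cs.wordProd (altWord i j k) = altP cs i j k := by
  induction k with
  | zero => rfl
  | succ k ih =>
    rw [altWord, range_succ, map_append, wordProd_append, ← altWord, ih, altP]
    simp [apply_ite cs.simple]

theorem mem_altWord {i j c : B} {k : ℕ} (hc : c ∈ altWord i j k) : c = i ∨ c = j := by
  obtain ⟨n, -, rfl⟩ := mem_map.mp hc
  split <;> simp

theorem not_isRightDescent_mul_altP (hm : orderOf (cs.simple i * cs.simple j) = m)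
    (hmin : ∀ u ∈ Subgroup.closure {cs.simple i, cs.simple j},
      cs.length x ≤ cs.length (x * u))
    {k : ℕ} (hk : k < m) :
    ¬ cs.IsRightDescent (x * altP cs i j k) (if Even k then i else j) := by
  intro hdesc
  have hsucc : altP cs i j k * cs.simple (if Even k then i else j) = altP cs i j (k + 1) := by
    simp [altP, apply_ite cs.simple]
  obtain ⟨ωx, hred, rfl⟩ := cs.exists_isReduced x
  rw [← wordProd_altWord, ← wordProd_append] at hdesc
  obtain ⟨r, hr, hexch⟩ := cs.exists_eraseIdx_of_isRightDescent hdesc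
  rw [wordProd_append, wordProd_altWord, mul_assoc, hsucc] at hexch
  rw [length_append, length_altWord] at hr
  -- Erasing a letter of `ωx` gives a shorter element of the coset; erasing one of `altWord k`
  -- writes `altP (k + 1)` as a product of `k - 1` generators.
  rcases lt_or_ge r ωx.length with hr' | hr'
  · rw [eraseIdx_append_of_lt_length hr', wordProd_append, wordProd_altWord] at hexch
    have hmem : altP cs i j (k + 1) * (altP cs i j k)⁻¹ ∈
        Subgroup.closure {cs.simple i, cs.simple j} := by
      simp only [← altZ_natCast]
      exact mul_mem (cs.altZ_mem_closure _) (inv_mem (cs.altZ_mem_closure _))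
    have hlt := hmin _ hmem
    rw [← mul_assoc, hexch, mul_inv_cancel_right, hred.eq] at hlt
    have := cs.length_wordProd_le (ωx.eraseIdx r)
    have := length_eraseIdx_add_one hr'
    omega
  · rw [eraseIdx_append_of_length_le hr', wordProd_append] at hexch
    obtain ⟨a, ha, hμ⟩ := cs.exists_wordProd_eq_altZ (i := i) (j := j)
      (δ := (altWord i j k).eraseIdx (r - ωx.length))
      fun c hc => mem_altWord (mem_of_mem_eraseIdx hc)
    rw [length_eraseIdx_of_lt (by simp; omega), length_altWord] at ha
    rw [hμ, ← altZ_natCast] at hexch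
    have := cs.eq_of_altZ_eq_altZ hm (mul_left_cancel hexch) (by omega)
    omega

theorem length_mul_altP (hm : orderOf (cs.simple i * cs.simple j) = m)
    (hmin : ∀ u ∈ Subgroup.closure {cs.simple i, cs.simple j},
      cs.length x ≤ cs.length (x * u))
    {k : ℕ} (hk : k ≤ m) : cs.length (x * altP cs i j k) = cs.length x + k := by
  induction k with
  | zero => simp [altP]
  | succ k ih =>
    have hnd := cs.not_isRightDescent_mul_altP hm hmin (k := k) (by omega)
    rw [isRightDescent_iff] at hnd
    have hsucc : x * altP cs i j (k + 1) =
        x * altP cs i j k * cs.simple (if Even k then i else j) := by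
      simp [altP, apply_ite cs.simple, mul_assoc]
    rcases cs.length_mul_simple (x * altP cs i j k) (if Even k then i else j) with h | h
    · rw [hsucc, h, ih (by omega)]; ring
    · exact absurd h hnd

theorem length_mul_altZ (hm : orderOf (cs.simple i * cs.simple j) = m)
    (hmin : ∀ u ∈ Subgroup.closure {cs.simple i, cs.simple j},
      cs.length x ≤ cs.length (x * u))
    {a : ℤ} (ha : a.natAbs ≤ m) : cs.length (x * cs.altZ i j a) = cs.length x + a.natAbs := by
  obtain ⟨k, rfl | rfl⟩ := Int.eq_nat_or_neg a
  · rw [altZ_natCast, Int.natAbs_natCast]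
    exact cs.length_mul_altP hm hmin (by simpa using ha)
  · rw [altZ_neg_natCast, Int.natAbs_neg, Int.natAbs_natCast]
    have hm' : orderOf (cs.simple j * cs.simple i) = m := by
      rw [← hm, ← orderOf_inv, mul_inv_rev, inv_simple, inv_simple]
    exact cs.length_mul_altP hm' (by rwa [Set.pair_comm]) (by simpa using ha)

theorem isRightDescent_mul_altZ_iff (hm : orderOf (cs.simple i * cs.simple j) = m)
    (hmin : ∀ u ∈ Subgroup.closure {cs.simple i, cs.simple j},
      cs.length x ≤ cs.length (x * u))
    {a a' : ℤ} {c : B} (ha : a.natAbs ≤ m) (ha' : a'.natAbs ≤ m)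
    (h : cs.altZ i j a * cs.simple c = cs.altZ i j a') :
    cs.IsRightDescent (x * cs.altZ i j a) c ↔ a'.natAbs < a.natAbs := by
  rw [IsRightDescent, mul_assoc, h, cs.length_mul_altZ hm hmin ha,
    cs.length_mul_altZ hm hmin ha']
  omega

theorem xor_isRightDescent_mul_altZ (hm : orderOf (cs.simple i * cs.simple j) = m)
    (hmin : ∀ u ∈ Subgroup.closure {cs.simple i, cs.simple j},
      cs.length x ≤ cs.length (x * u))
    {a : ℤ} (ha0 : a ≠ 0) (ha : a.natAbs < m) :
    Xor (cs.IsRightDescent (x * cs.altZ i j a) i) (cs.IsRightDescent (x * cs.altZ i j a) j) := by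
  have hup := cs.altZ_add_one (i := i) (j := j) a
  have hdown := cs.altZ_sub_one (i := i) (j := j) a
  by_cases he : Even a <;> simp only [he, if_true, if_false] at hup hdown <;>
  · rw [cs.isRightDescent_mul_altZ_iff hm hmin (by omega) (by omega) hup.symm,
      cs.isRightDescent_mul_altZ_iff hm hmin (by omega) (by omega) hdown.symm, xor_def]
    omega

theorem isRightDescent_mul_altZ_self (hm : orderOf (cs.simple i * cs.simple j) = m)
    (hmin : ∀ u ∈ Subgroup.closure {cs.simple i, cs.simple j},
      cs.length x ≤ cs.length (x * u))
    (hm0 : 0 < m) {c : B} (hc : c = i ∨ c = j) : cs.IsRightDescent (x * cs.altZ i j m) c := by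
  rcases cs.altZ_mul_simple m hc with h | h
  · rw [(cs.altZ_eq_altZ_iff hm (a := m + 1) (b := 1 - m)).mpr ⟨1, by ring⟩] at h
    exact (cs.isRightDescent_mul_altZ_iff hm hmin (a' := 1 - m) (by simp) (by omega) h).mpr
      (by omega)
  · exact (cs.isRightDescent_mul_altZ_iff hm hmin (by simp) (by omega) h).mpr (by omega)

theorem exists_eq_mul_altZ_of_xor (hm : orderOf (cs.simple i * cs.simple j) = m) (hm0 : 0 < m)
    (hmin : ∀ u ∈ Subgroup.closure {cs.simple i, cs.simple j},
      cs.length x ≤ cs.length (x * u))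
    {w u : W} (hw : Xor (cs.IsRightDescent w i) (cs.IsRightDescent w j))
    (hu : u ∈ Subgroup.closure {cs.simple i, cs.simple j}) (hwu : w = x * u) :
    ∃ a : ℤ, a ≠ 0 ∧ a.natAbs < m ∧ w = x * cs.altZ i j a := by
  obtain ⟨a, ha₁, ha₂, rfl⟩ := cs.exists_altZ_eq_of_mem_closure hm hm0 hu
  subst hwu
  refine ⟨a, ?_, ?_, rfl⟩
  · rintro rfl
    rw [altZ_zero, mul_one] at hw
    have hndesc : ∀ c, (c = i ∨ c = j) → ¬ cs.IsRightDescent x c := fun c hc hd =>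
      (hmin _ (by rcases hc with rfl | rfl <;> exact Subgroup.subset_closure (by simp))).not_gt hd
    rcases hw.or with h | h
    exacts [hndesc i (.inl rfl) h, hndesc j (.inr rfl) h]
  · suffices a ≠ m by omega
    rintro rfl
    rcases hw with ⟨-, h⟩ | ⟨-, h⟩
    exacts [h (cs.isRightDescent_mul_altZ_self hm hmin hm0 (.inr rfl)),
      h (cs.isRightDescent_mul_altZ_self hm hmin hm0 (.inl rfl))]

end MinimalCosetRepresentative

end CoxeterSystem

theorem stmt6_general {B W : Type*} [Group W] {M : CoxeterMatrix B} (cs : CoxeterSystem M W)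
    (i j : B) (m : ℕ) (hm3 : 3 ≤ m)
    (hm : orderOf (cs.simple i * cs.simple j) = m) :
    ∀ w ∈ {w : W | Xor' (cs.IsRightDescent w i) (cs.IsRightDescent w j)},
      ∀ x : W,
        ((∃ u ∈ Subgroup.closure {cs.simple i, cs.simple j}, x = w * u) ∧
          ∀ y : W, (∃ u ∈ Subgroup.closure {cs.simple i, cs.simple j}, y = w * u) →
            cs.length x ≤ cs.length y) →
        (∃! q : Bool × ℕ, (1 ≤ q.2 ∧ q.2 ≤ m - 1) ∧
            w = x * (if q.1 then altP cs i j q.2 else altP cs j i q.2)) ∧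
        ∀ (b : Bool) (k : ℕ), 1 ≤ k → k ≤ m - 1 →
          w = x * (if b then altP cs i j k else altP cs j i k) →
          (x * (if b then altP cs i j (m - k) else altP cs j i (m - k)) ∈
            {w : W | Xor' (cs.IsRightDescent w i) (cs.IsRightDescent w j)}) ∧
          x * (if b then altP cs i j (m - (m - k)) else altP cs j i (m - (m - k)))
            = w := by
  intro w hw x ⟨⟨u, hu, hxu⟩, hxmin⟩
  have hmin : ∀ v ∈ Subgroup.closure {cs.simple i, cs.simple j},
      cs.length x ≤ cs.length (x * v) :=
    fun v hv => hxmin _ ⟨u * v, mul_mem hu hv, by rw [hxu, mul_assoc]⟩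
  have hsigned : ∀ (b : Bool) (k : ℕ), (if b then (k : ℤ) else -k).natAbs = k := by
    intro b k; cases b <;> simp
  simp only [ite_altP_eq_altZ]
  refine ⟨?_, fun b k hk1 hkm hwk => ⟨?_, by rw [Nat.sub_sub_self (by omega), hwk]⟩⟩
  · obtain ⟨a, ha0, ham, hwa⟩ := cs.exists_eq_mul_altZ_of_xor hm (by omega) hmin hw
      (inv_mem hu) (by rw [hxu, mul_inv_cancel_right])
    have hq : ∀ q : Bool × ℕ, 1 ≤ q.2 →
        ((if q.1 then (q.2 : ℤ) else -q.2) = a ↔ q = (decide (0 < a), a.natAbs)) := by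
      rintro ⟨_ | _, k⟩ hk <;> simp <;> omega
    refine ⟨(decide (0 < a), a.natAbs), ⟨⟨by omega, by omega⟩, ?_⟩,
      fun q ⟨hqm, hwq⟩ => ?_⟩
    · rwa [(hq _ (by simp; omega)).mpr rfl]
    · refine (hq q hqm.1).mp
        (cs.eq_of_altZ_eq_altZ hm (mul_left_cancel (hwq.symm.trans hwa)) ?_)
      have := hsigned q.1 q.2
      omega
  · exact cs.xor_isRightDescent_mul_altZ hm hmin (by have := hsigned b (m - k); omega)
      (by have := hsigned b (m - k); omega)

/-- Let `s = s_i`, `t = s_j` with `st` of finite order `m ≥ 3`.  Every `w ∈ D_R(s,t)`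
is, in a unique way, the `k`-th element (`1 ≤ k ≤ m-1`) of one of the two strings of
the coset `w⟨s,t⟩` (`x` being the minimal-length element of this coset); the map `w ↦ w̃`
sending the `k`-th element of its string to the `(m-k)`-th element of the same string is
hence well defined, takes values in `D_R(s,t)`, and is an involution. -/
theorem stmt6 {B W : Type*} [Group W] {M : CoxeterMatrix B} (cs : CoxeterSystem M W)
    (i j : B) (hij : i ≠ j) (m : ℕ) (hm3 : 3 ≤ m)
    (hm : orderOf (cs.simple i * cs.simple j) = m) :
    ∀ w ∈ {w : W | Xor' (cs.IsRightDescent w i) (cs.IsRightDescent w j)},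
      ∀ x : W,
        ((∃ u ∈ Subgroup.closure {cs.simple i, cs.simple j}, x = w * u) ∧
          ∀ y : W, (∃ u ∈ Subgroup.closure {cs.simple i, cs.simple j}, y = w * u) →
            cs.length x ≤ cs.length y) →
        (∃! q : Bool × ℕ, (1 ≤ q.2 ∧ q.2 ≤ m - 1) ∧
            w = x * (if q.1 then altP cs i j q.2 else altP cs j i q.2)) ∧
        ∀ (b : Bool) (k : ℕ), 1 ≤ k → k ≤ m - 1 →
          w = x * (if b then altP cs i j k else altP cs j i k) →
          (x * (if b then altP cs i j (m - k) else altP cs j i (m - k)) ∈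
            {w : W | Xor' (cs.IsRightDescent w i) (cs.IsRightDescent w j)}) ∧
          x * (if b then altP cs i j (m - (m - k)) else altP cs j i (m - (m - k)))
            = w :=
  stmt6_general cs i j m hm3 hm
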